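/- Isolated-component coverage (same-dimension-output version): Let f_N(A, X) = 𝟙_Nᵀ(A + (1+ε)I_N)·X·Θ denote the readout on an N-node graph and similarly f_M on an M-node graph. Fix (A, X) with N nodes and D + N + Nε ≠ 0 (D = Σ_{ij}A_{ij}). Then for any M-node graph (A'', X'') (arbitrary M ≥ 0), there exists p ∈ ℝ^{1×F} such that f_N(A, X + 𝟙_N·p) = f_N(A, X) + f_M(A'', X''), i.e., the prompt reproduces the effect of adding an isolated component (A'', X'') to the graph. -/

import Mathlib

/-! The readout is linear in `X`, and on a constant prompt `𝟙 p` it equals `c • (p ᵥ* Θ)`,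
where `c = D + N + Nε` is the entry sum of `A + (1+ε) I`. Since `gin ε Θ A'' X''` is
`q ᵥ* Θ` with `q = 𝟙ᵀ (A'' + (1+ε) I) X''`, the prompt `p = c⁻¹ • q` works. -/

open Matrix BigOperators

/-- One-layer linear GIN with sum readout: 𝟙ᵀ (A + (1+ε) I) X Θ as a row vector. -/
noncomputable def gin {n : Type*} [Fintype n] [DecidableEq n] {F Fp : ℕ}
    (ε : ℝ) (Θ : Matrix (Fin F) (Fin Fp) ℝ)
    (A : Matrix n n ℝ) (X : Matrix n (Fin F) ℝ) : Fin Fp → ℝ :=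
  fun j => ∑ i, ((A + (1 + ε) • (1 : Matrix n n ℝ)) * X * Θ) i j

/-- 𝟙·p : the matrix each of whose rows is the row vector p. -/
def prompt (n : Type*) {F : ℕ} (p : Fin F → ℝ) : Matrix n (Fin F) ℝ :=
  Matrix.of fun _ j => p j

section Gin

variable {n : Type*} [Fintype n] [DecidableEq n] {F Fp : ℕ} (ε : ℝ)
  (Θ : Matrix (Fin F) (Fin Fp) ℝ) (A : Matrix n n ℝ)

theorem gin_eq_vecMul (X : Matrix n (Fin F) ℝ) :
    gin ε Θ A X = (fun _ => (1 : ℝ)) ᵥ* ((A + (1 + ε) • (1 : Matrix n n ℝ)) * X) ᵥ* Θ := by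
  ext j
  rw [vecMul_vecMul]
  simp [gin, vecMul, dotProduct]

theorem gin_add (X Y : Matrix n (Fin F) ℝ) :
    gin ε Θ A (X + Y) = gin ε Θ A X + gin ε Θ A Y := by
  simp only [gin_eq_vecMul, Matrix.mul_add, vecMul_add, add_vecMul]

theorem sum_sum_add_smul_one :
    ∑ i, ∑ j, (A + (1 + ε) • (1 : Matrix n n ℝ)) i j
      = (∑ i, ∑ j, A i j) + Fintype.card n + Fintype.card n * ε := by
  simp only [Matrix.add_apply, Matrix.smul_apply, one_apply, smul_eq_mul, mul_ite, mul_one,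
    mul_zero, Finset.sum_add_distrib, Finset.sum_ite_eq, Finset.mem_univ, if_true, Finset.sum_const,
    Finset.card_univ, nsmul_eq_mul]
  ring

theorem gin_prompt (p : Fin F → ℝ) :
    gin ε Θ A (prompt n p)
      = ((∑ i, ∑ j, A i j) + Fintype.card n + Fintype.card n * ε) • (p ᵥ* Θ) := by
  ext k
  simp only [gin, ← sum_sum_add_smul_one, Pi.smul_apply, smul_eq_mul, mul_apply, prompt,
    of_apply, vecMul, dotProduct, Finset.sum_mul, Finset.mul_sum, mul_assoc]
  rw [Finset.sum_comm]

end Gin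

theorem stmt9 (N M F Fp : ℕ) (A : Matrix (Fin N) (Fin N) ℝ)
    (X : Matrix (Fin N) (Fin F) ℝ)
    (A'' : Matrix (Fin M) (Fin M) ℝ) (X'' : Matrix (Fin M) (Fin F) ℝ)
    (ε : ℝ) (Θ : Matrix (Fin F) (Fin Fp) ℝ)
    (hD : (∑ i, ∑ j, A i j) + N + N * ε ≠ 0) :
    ∃ p : Fin F → ℝ,
      gin ε Θ A (X + prompt (Fin N) p) = gin ε Θ A X + gin ε Θ A'' X'' := by
  set c := (∑ i, ∑ j, A i j) + N + N * ε
  set q := (fun _ => (1 : ℝ)) ᵥ* ((A'' + (1 + ε) • (1 : Matrix (Fin M) (Fin M) ℝ)) * X'')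
  refine ⟨c⁻¹ • q, ?_⟩
  rw [gin_add, gin_prompt, Fintype.card_fin, smul_vecMul, smul_smul, mul_inv_cancel₀ hD,
    one_smul, gin_eq_vecMul ε Θ A'']
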